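/- Assume the coexistence condition (ss): r_n/(1+Q_n) > 1. Let (B,P) be a solution of (LV) in Ω. If B_1(0) > 0 and P_n(0) > 0, then r_1 − 1 − r_1 s_n > 0 and limsup_{t→∞} Σ_{j=1}^n (r_1 s_j + 1) P_j(t) ≥ r_1 − 1 − r_1 s_n. -/

import Mathlib

/-!
Since `Q_n ≥ s_n r_n`, condition (ss) gives `r_n (1 - s_n) > 1`, hence `r_1 (1 - s_n) > 1`.
For the limsup, the Lyapunov function `W = (r_1 s_n)⁻¹ log B_1 + log P_n` satisfies
`W' = (r_1 s_n)⁻¹ (r_1 - 1 - r_1 s_n - Σ_j (r_1 s_j + 1) P_j)`, the terms `Σ B_j` cancelling.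
On `Ω`, `B_1 ≤ 1` and `P_n ≤ 1/s_n`, so `W` is bounded above; were the limsup smaller, `W'`
would eventually stay above a positive constant and `W` would be unbounded. `B_1` and `P_n`
stay positive because they solve linear equations `x' = g x` with `g` bounded below.
-/

open Filter

noncomputable def lvQ (r s : ℕ → ℝ) (k : ℕ) : ℝ :=
  (∑ i ∈ Finset.Icc 1 (k - 1), s i * (r i - r (i + 1))) + s k * r k

def IsSolutionLV (n : ℕ) (r s : ℕ → ℝ) (B P : ℕ → ℝ → ℝ) : Prop :=
  (∀ i ∈ Finset.Icc 1 n, ∀ t : ℝ, 0 ≤ t →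
      HasDerivAt (B i)
        (r i * B i t * (1 - 1 / r i - ∑ j ∈ Finset.Icc 1 n, (B j t + s j * P j t))
          - B i t * ∑ j ∈ Finset.Icc i n, P j t) t) ∧
  (∀ i ∈ Finset.Icc 1 n, ∀ t : ℝ, 0 ≤ t →
      HasDerivAt (P i) ((s i)⁻¹ * P i t * ((∑ j ∈ Finset.Icc 1 i, B j t) - s i)) t) ∧
  (∀ t : ℝ, 0 ≤ t → (∀ i ∈ Finset.Icc 1 n, 0 ≤ B i t ∧ 0 ≤ P i t) ∧
      (∑ i ∈ Finset.Icc 1 n, (B i t + s i * P i t)) ≤ 1)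

open Set

lemma monotoneOn_Ici_of_hasDerivAt_nonneg {f f' : ℝ → ℝ} {a : ℝ}
    (hf : ∀ x, a ≤ x → HasDerivAt f (f' x) x) (hf' : ∀ x, a ≤ x → 0 ≤ f' x) :
    MonotoneOn f (Ici a) :=
  monotoneOn_of_hasDerivWithinAt_nonneg (convex_Ici a)
    (fun x hx => (hf x hx).continuousAt.continuousWithinAt)
    (fun x hx => by rw [interior_Ici] at hx; exact (hf x hx.le).hasDerivWithinAt)
    (fun x hx => by rw [interior_Ici] at hx; exact hf' x hx.le)

/-- `exp (K t) f t` is nondecreasing, because `f ≥ 0` and `g + K ≥ 0`. -/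
lemma pos_of_hasDerivAt_mul_self {f g : ℝ → ℝ} {K t : ℝ}
    (hf : ∀ u, 0 ≤ u → HasDerivAt f (g u * f u) u) (hg : ∀ u, 0 ≤ u → -K ≤ g u)
    (hf_nonneg : ∀ u, 0 ≤ u → 0 ≤ f u) (h0 : 0 < f 0) (ht : 0 ≤ t) : 0 < f t := by
  have hmono : MonotoneOn (fun u => Real.exp (K * u) * f u) (Ici 0) := by
    refine monotoneOn_Ici_of_hasDerivAt_nonneg
      (f' := fun u => Real.exp (K * u) * ((K + g u) * f u)) (fun u hu => ?_) (fun u hu => ?_)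
    · have hexp := ((hasDerivAt_id u).const_mul K).exp
      exact (hexp.mul (hf u hu)).congr_deriv (by simp only [id]; ring)
    · have := hf_nonneg u hu
      have : 0 ≤ K + g u := by linarith [hg u hu]
      positivity
  have h := hmono self_mem_Ici ht ht
  simp only [mul_zero, Real.exp_zero, one_mul] at h
  exact pos_of_mul_pos_right (h0.trans_le h) (Real.exp_pos _).le

lemma tendsto_atTop_of_le_deriv {W w : ℝ → ℝ} {δ : ℝ} (hδ : 0 < δ)
    (hW : ∀ᶠ t in atTop, HasDerivAt W (w t) t) (hw : ∀ᶠ t in atTop, δ ≤ w t) :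
    Tendsto W atTop atTop := by
  obtain ⟨T, hT⟩ := eventually_atTop.mp (hW.and hw)
  have hmono : MonotoneOn (fun t => W t - δ * t) (Ici T) :=
    monotoneOn_Ici_of_hasDerivAt_nonneg
      (fun t ht => (hT t ht).1.sub (by simpa using (hasDerivAt_id t).const_mul δ))
      (fun t ht => sub_nonneg.2 (hT t ht).2)
  refine tendsto_atTop_mono' atTop ?_
    (tendsto_atTop_add_const_left _ (W T - δ * T) (tendsto_id.const_mul_atTop hδ))
  filter_upwards [eventually_ge_atTop T] with t ht
  have := hmono self_mem_Ici ht ht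
  simp only [id] at this ⊢
  linarith

lemma le_limsup_of_hasDerivAt_of_bddAbove {W f : ℝ → ℝ} {a M C : ℝ} (ha : 0 < a)
    (hW : ∀ᶠ t in atTop, HasDerivAt W (a * (M - f t)) t) (hWC : ∀ᶠ t in atTop, W t ≤ C)
    (hf : IsBoundedUnder (· ≤ ·) atTop f) : M ≤ limsup f atTop := by
  by_contra! hlt
  have hf_lt : ∀ᶠ t in atTop, f t < (limsup f atTop + M) / 2 :=
    eventually_lt_of_limsup_lt (by linarith) hf
  have hδ : 0 < a * ((M - limsup f atTop) / 2) := mul_pos ha (by linarith)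
  have hW_top := tendsto_atTop_of_le_deriv hδ hW <| hf_lt.mono fun t ht =>
    mul_le_mul_of_nonneg_left (by linarith) ha.le
  obtain ⟨t, hCt, htC⟩ := ((hW_top.eventually_gt_atTop C).and hWC).exists
  linarith

section Parameters

variable {n : ℕ} {r s : ℕ → ℝ}

lemma mul_le_lvQ (hr : AntitoneOn r (Icc 1 n)) (hs : ∀ i ∈ Finset.Icc 1 n, 0 ≤ s i) :
    s n * r n ≤ lvQ r s n := by
  have hsum : 0 ≤ ∑ i ∈ Finset.Icc 1 (n - 1), s i * (r i - r (i + 1)) := by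
    refine Finset.sum_nonneg fun i hi => ?_
    obtain ⟨hi1, hin⟩ := Finset.mem_Icc.mp hi
    have hsi := hs i (Finset.mem_Icc.mpr ⟨hi1, by omega⟩)
    have hri : r (i + 1) ≤ r i := hr ⟨hi1, by omega⟩ ⟨by omega, by omega⟩ (by omega)
    exact mul_nonneg hsi (sub_nonneg.2 hri)
  unfold lvQ
  linarith

lemma sub_mul_pos_of_one_lt_div_lvQ (hn : 1 ≤ n) (hr : AntitoneOn r (Icc 1 n)) (hrn : 0 < r n)
    (hs : ∀ i ∈ Finset.Icc 1 n, 0 ≤ s i) (hss : 1 < r n / (1 + lvQ r s n)) :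
    0 < r 1 - 1 - r 1 * s n := by
  have hQ := mul_le_lvQ hr hs
  have hQ_pos : 0 < 1 + lvQ r s n := by
    by_contra! hQ_nonpos
    linarith [div_nonpos_of_nonneg_of_nonpos hrn.le hQ_nonpos]
  have hrQ : 1 + s n * r n < r n := by
    rw [one_lt_div hQ_pos] at hss
    linarith
  have hsn : s n < 1 := by nlinarith
  have hr1 : r n ≤ r 1 := hr ⟨le_rfl, hn⟩ ⟨hn, le_rfl⟩ hn
  nlinarith [mul_le_mul_of_nonneg_right hr1 (sub_nonneg.2 hsn.le)]

end Parameters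

noncomputable def lvLyapunov (n : ℕ) (r s : ℕ → ℝ) (B P : ℕ → ℝ → ℝ) (t : ℝ) : ℝ :=
  (r 1 * s n)⁻¹ * Real.log (B 1 t) + Real.log (P n t)

namespace IsSolutionLV

variable {n : ℕ} {r s : ℕ → ℝ} {B P : ℕ → ℝ → ℝ} {j : ℕ} {t : ℝ}

lemma add_mul_le_one (hsol : IsSolutionLV n r s B P) (hs : ∀ i ∈ Finset.Icc 1 n, 0 ≤ s i)
    (hj : j ∈ Finset.Icc 1 n) (ht : 0 ≤ t) : B j t + s j * P j t ≤ 1 := by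
  obtain ⟨hBP, hsum⟩ := hsol.2.2 t ht
  have hterm_nonneg : ∀ i ∈ Finset.Icc 1 n, 0 ≤ B i t + s i * P i t := fun i hi =>
    add_nonneg (hBP i hi).1 (mul_nonneg (hs i hi) (hBP i hi).2)
  exact (Finset.single_le_sum hterm_nonneg hj).trans hsum

lemma B_le_one (hsol : IsSolutionLV n r s B P) (hs : ∀ i ∈ Finset.Icc 1 n, 0 ≤ s i)
    (hj : j ∈ Finset.Icc 1 n) (ht : 0 ≤ t) : B j t ≤ 1 := by
  have := hsol.add_mul_le_one hs hj ht
  have := mul_nonneg (hs j hj) ((hsol.2.2 t ht).1 j hj).2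
  linarith

lemma P_le_inv (hsol : IsSolutionLV n r s B P) (hs : ∀ i ∈ Finset.Icc 1 n, 0 < s i)
    (hj : j ∈ Finset.Icc 1 n) (ht : 0 ≤ t) : P j t ≤ (s j)⁻¹ := by
  have := hsol.add_mul_le_one (fun i hi => (hs i hi).le) hj ht
  have := ((hsol.2.2 t ht).1 j hj).1
  rw [← one_div, le_div_iff₀ (hs j hj)]
  linarith

lemma B_one_pos (hsol : IsSolutionLV n r s B P) (hn : 1 ≤ n) (hr1 : 0 < r 1)
    (hs : ∀ i ∈ Finset.Icc 1 n, 0 < s i) (h0 : 0 < B 1 0) (ht : 0 ≤ t) : 0 < B 1 t := by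
  have h1 : 1 ∈ Finset.Icc 1 n := Finset.mem_Icc.mpr ⟨le_rfl, hn⟩
  refine pos_of_hasDerivAt_mul_self
    (g := fun u => r 1 * (1 - ∑ j ∈ Finset.Icc 1 n, (B j u + s j * P j u)) - 1
      - ∑ j ∈ Finset.Icc 1 n, P j u)
    (K := 1 + ∑ j ∈ Finset.Icc 1 n, (s j)⁻¹) (fun u hu => ?_) (fun u hu => ?_)
    (fun u hu => ((hsol.2.2 u hu).1 1 h1).1) h0 ht
  · convert hsol.1 1 h1 u hu using 1
    field_simp
    ring
  · have hS := (hsol.2.2 u hu).2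
    have hP := Finset.sum_le_sum fun j hj => hsol.P_le_inv hs hj hu
    nlinarith

lemma P_pos (hsol : IsSolutionLV n r s B P) (hj : j ∈ Finset.Icc 1 n) (hsj : 0 < s j)
    (h0 : 0 < P j 0) (ht : 0 ≤ t) : 0 < P j t := by
  refine pos_of_hasDerivAt_mul_self
    (g := fun u => (s j)⁻¹ * (∑ i ∈ Finset.Icc 1 j, B i u) - 1) (K := 1)
    (fun u hu => ?_) (fun u hu => ?_) (fun u hu => ((hsol.2.2 u hu).1 j hj).2) h0 ht
  · convert hsol.2.1 j hj u hu using 1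
    field_simp
  · have hB : 0 ≤ ∑ i ∈ Finset.Icc 1 j, B i u := Finset.sum_nonneg fun i hi =>
      ((hsol.2.2 u hu).1 i (Finset.Icc_subset_Icc_right (Finset.mem_Icc.mp hj).2 hi)).1
    have := mul_nonneg (inv_pos.2 hsj).le hB
    linarith

lemma hasDerivAt_lvLyapunov (hsol : IsSolutionLV n r s B P) (hn : 1 ≤ n) (hr1 : r 1 ≠ 0)
    (hsn : s n ≠ 0) (hB : 0 < B 1 t) (hP : 0 < P n t) (ht : 0 ≤ t) :
    HasDerivAt (lvLyapunov n r s B P) ((r 1 * s n)⁻¹ *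
      (r 1 - 1 - r 1 * s n - ∑ j ∈ Finset.Icc 1 n, (r 1 * s j + 1) * P j t)) t := by
  have hB' := (hsol.1 1 (Finset.mem_Icc.mpr ⟨le_rfl, hn⟩) t ht).log hB.ne'
  have hP' := (hsol.2.1 n (Finset.mem_Icc.mpr ⟨hn, le_rfl⟩) t ht).log hP.ne'
  refine ((hB'.const_mul (r 1 * s n)⁻¹).add hP').congr_deriv ?_
  simp only [Finset.sum_add_distrib, add_mul, one_mul, mul_assoc, ← Finset.mul_sum]
  field_simp
  ring

lemma lvLyapunov_le (hsol : IsSolutionLV n r s B P) (hn : 1 ≤ n) (hr1 : 0 < r 1)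
    (hs : ∀ i ∈ Finset.Icc 1 n, 0 < s i) (hB : 0 < B 1 t) (hP : 0 < P n t) (ht : 0 ≤ t) :
    lvLyapunov n r s B P t ≤ Real.log (s n)⁻¹ := by
  have hn_mem : n ∈ Finset.Icc 1 n := Finset.mem_Icc.mpr ⟨hn, le_rfl⟩
  have hB1 := hsol.B_le_one (fun i hi => (hs i hi).le) (Finset.mem_Icc.mpr ⟨le_rfl, hn⟩) ht
  have hlogB : Real.log (B 1 t) ≤ 0 := Real.log_nonpos hB.le hB1
  have hlogP := Real.log_le_log hP (hsol.P_le_inv hs hn_mem ht)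
  have := mul_nonpos_of_nonneg_of_nonpos (inv_pos.2 (mul_pos hr1 (hs n hn_mem))).le hlogB
  unfold lvLyapunov
  linarith

lemma isBoundedUnder_sum_mul (hsol : IsSolutionLV n r s B P)
    (hs : ∀ i ∈ Finset.Icc 1 n, 0 < s i) {c : ℕ → ℝ} (hc : ∀ j ∈ Finset.Icc 1 n, 0 ≤ c j) :
    IsBoundedUnder (· ≤ ·) atTop fun t => ∑ j ∈ Finset.Icc 1 n, c j * P j t := by
  refine isBoundedUnder_of_eventually_le (a := ∑ j ∈ Finset.Icc 1 n, c j * (s j)⁻¹) ?_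
  filter_upwards [eventually_ge_atTop 0] with t ht
  exact Finset.sum_le_sum fun j hj =>
    mul_le_mul_of_nonneg_left (hsol.P_le_inv hs hj ht) (hc j hj)

end IsSolutionLV

theorem stmt12
    (n : ℕ) (hn : 1 ≤ n) (r s : ℕ → ℝ)
    (hr : ∀ i, 1 ≤ i → i < n → r (i + 1) < r i) (hrn : 1 < r n)
    (hs1 : 0 < s 1) (hs : ∀ i, 1 ≤ i → i < n → s i < s (i + 1))
    (hss : 1 < r n / (1 + lvQ r s n))
    (B P : ℕ → ℝ → ℝ) (hsol : IsSolutionLV n r s B P)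
    (hB10 : 0 < B 1 0) (hPn0 : 0 < P n 0) :
    0 < r 1 - 1 - r 1 * s n ∧
    r 1 - 1 - r 1 * s n ≤
      limsup (fun t => ∑ j ∈ Finset.Icc 1 n, (r 1 * s j + 1) * P j t) atTop := by
  have hn_mem : n ∈ Finset.Icc 1 n := Finset.mem_Icc.mpr ⟨hn, le_rfl⟩
  have hr_anti : AntitoneOn r (Icc 1 n) := antitoneOn_of_add_one_le ordConnected_Icc
    fun i _ hi hi' => (hr i hi.1 (by linarith [hi'.2])).le
  have hs_mono : MonotoneOn s (Icc 1 n) := monotoneOn_of_le_add_one ordConnected_Icc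
    fun i _ hi hi' => (hs i hi.1 (by linarith [hi'.2])).le
  have hs_pos : ∀ i ∈ Finset.Icc 1 n, 0 < s i := fun i hi =>
    hs1.trans_le (hs_mono ⟨le_rfl, hn⟩ (Finset.mem_Icc.mp hi) (Finset.mem_Icc.mp hi).1)
  have hr1 : 0 < r 1 := by linarith [hr_anti ⟨le_rfl, hn⟩ ⟨hn, le_rfl⟩ hn]
  have hB_pos := fun t (ht : 0 ≤ t) => hsol.B_one_pos hn hr1 hs_pos hB10 ht
  have hP_pos := fun t (ht : 0 ≤ t) => hsol.P_pos hn_mem (hs_pos n hn_mem) hPn0 ht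
  refine ⟨sub_mul_pos_of_one_lt_div_lvQ hn hr_anti (by linarith)
    (fun i hi => (hs_pos i hi).le) hss, ?_⟩
  refine le_limsup_of_hasDerivAt_of_bddAbove (W := lvLyapunov n r s B P)
    (C := Real.log (s n)⁻¹) (inv_pos.2 (mul_pos hr1 (hs_pos n hn_mem))) ?_ ?_ ?_
  · filter_upwards [eventually_ge_atTop 0] with t ht
    exact hsol.hasDerivAt_lvLyapunov hn hr1.ne' (hs_pos n hn_mem).ne' (hB_pos t ht)
      (hP_pos t ht) ht
  · filter_upwards [eventually_ge_atTop 0] with t ht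
    exact hsol.lvLyapunov_le hn hr1 hs_pos (hB_pos t ht) (hP_pos t ht) ht
  · exact hsol.isBoundedUnder_sum_mul hs_pos fun j hj => by nlinarith [hs_pos j hj]
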